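/- arXiv:0901.4041 — 2 statements merged into one kernel-verified Lean document; each statement's English description precedes it below -/
import Mathlib

section
/- Let Ω ⊂ ℝ³ be measurable with finite Lebesgue measure and let M > 0. Let W : M^{3×3} → [0,+∞] satisfy: W is finite-valued and of class C¹ on M^{3×3}_+; W ≥ 0 everywhere and W(Id) = 0; W is finite-valued and of class C² on the open δ-neighbourhood of SO(3) for some δ > 0; and |DW(F)Fᵀ| ≤ k(W(F)+1) for every F ∈ M^{3×3}_+, for some k > 0. Then there exists a constant C > 0 (depending only on W and M) with the following property: for every t ∈ (0,1] and every measurable G : Ω → M^{3×3} with det(Id + tG(x)) > 0 for a.e. x, ‖G‖_{L²(Ω)} ≤ M and ∫_Ω W(Id + tG) dx ≤ M t², the function E(x) := t⁻¹ DW(Id + tG(x))(Id + tG(x))ᵀ satisfies ∫_Λ |E| dx ≤ C( t + |Λ|^{1/2} ) for every measurable set Λ ⊆ Ω. -/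
open Matrix MeasureTheory Filter Topology
open scoped ENNReal

noncomputable section

attribute [local instance] Matrix.normedAddCommGroup Matrix.normedSpace

/-- The Frobenius inner product `A : B = tr (Aᵀ B) = ∑ᵢⱼ Aᵢⱼ Bᵢⱼ`. -/
def frobInner {n : ℕ} (A B : Matrix (Fin n) (Fin n) ℝ) : ℝ := ∑ i, ∑ j, A i j * B i j

/-- The Frobenius norm `|A| = (A : A)^{1/2}`. -/
def frobNorm {n : ℕ} (A : Matrix (Fin n) (Fin n) ℝ) : ℝ := Real.sqrt (frobInner A A)

/-- The gradient of a function on 3×3 matrices with respect to the Frobenius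
inner product: `(DW F)ᵢⱼ = ∂W/∂Fᵢⱼ`. -/
def matGrad (w : Matrix (Fin 3) (Fin 3) ℝ → ℝ) (F : Matrix (Fin 3) (Fin 3) ℝ) :
    Matrix (Fin 3) (Fin 3) ℝ :=
  fun i j => fderiv ℝ w F (Matrix.single i j 1)

/-- The set of proper rotations SO(3). -/
def SO3 : Set (Matrix (Fin 3) (Fin 3) ℝ) := {R | Rᵀ * R = 1 ∧ R.det = 1}

/-- The real-valued function associated to an extended-real-valued energy density. -/
def wr (W : Matrix (Fin 3) (Fin 3) ℝ → ℝ≥0∞) : Matrix (Fin 3) (Fin 3) ℝ → ℝ :=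
  fun F => (W F).toReal

/-- The Frobenius distance from a matrix to SO(3). -/
def distSO3 (F : Matrix (Fin 3) (Fin 3) ℝ) : ℝ :=
  sInf ((fun R => frobNorm (F - R)) '' SO3)

/-!
Since `Id` minimises `W`, `DW(Id) = 0`; as `W` is `C²` near `Id`, `DW` is Lipschitz there, so
`|DW(F)Fᵀ| ≤ L |F - Id|` for `|F - Id| < r`. Where `t |G| < r` this gives `|E| ≤ L |G|`, and
Cauchy–Schwarz bounds the integral over that part of `Λ` by `L M |Λ|^{1/2}`. On the rest the growth
condition gives `|E| ≤ k (W(Id + tG) + 1) / t`; Chebyshev bounds its measure by `M² t² / r²` and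
`∫ W ≤ M t²`, so this part contributes `O(t)`.
-/

open scoped NNReal

section Frobenius

variable {n : ℕ}

lemma frobNorm_nonneg (A : Matrix (Fin n) (Fin n) ℝ) : 0 ≤ frobNorm A :=
  Real.sqrt_nonneg _

lemma frobNorm_smul (c : ℝ) (A : Matrix (Fin n) (Fin n) ℝ) :
    frobNorm (c • A) = |c| * frobNorm A := by
  have h : frobInner (c • A) (c • A) = c ^ 2 * frobInner A A := by
    simp only [frobInner, Finset.mul_sum, Matrix.smul_apply, smul_eq_mul]
    exact Finset.sum_congr rfl fun _ _ => Finset.sum_congr rfl fun _ _ => by ring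
  rw [frobNorm, h, Real.sqrt_mul (sq_nonneg c), Real.sqrt_sq_eq_abs, frobNorm]

lemma norm_le_frobNorm (A : Matrix (Fin n) (Fin n) ℝ) : ‖A‖ ≤ frobNorm A := by
  refine (norm_le_iff (frobNorm_nonneg A)).2 fun i j => ?_
  rw [Real.norm_eq_abs, ← Real.sqrt_sq_eq_abs, frobNorm, frobInner, sq]
  gcongr
  have hrow := Finset.single_le_sum (fun j' _ => mul_self_nonneg (A i j')) (Finset.mem_univ j)
  exact hrow.trans (Finset.single_le_sum (f := fun i' => ∑ j', A i' j' * A i' j')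
    (fun i' _ => Finset.sum_nonneg fun j' _ => mul_self_nonneg _) (Finset.mem_univ i))

lemma frobNorm_le_card_mul_norm (A : Matrix (Fin n) (Fin n) ℝ) : frobNorm A ≤ n * ‖A‖ := by
  have hentry : ∀ i j, A i j * A i j ≤ ‖A‖ ^ 2 := fun i j => by
    have := norm_entry_le_entrywise_sup_norm A (i := i) (j := j)
    rw [Real.norm_eq_abs] at this
    nlinarith [abs_mul_abs_self (A i j), abs_nonneg (A i j)]
  have h : frobInner A A ≤ (n * ‖A‖) ^ 2 := calc
    frobInner A A ≤ ∑ _i : Fin n, ∑ _j : Fin n, ‖A‖ ^ 2 :=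
      Finset.sum_le_sum fun i _ => Finset.sum_le_sum fun j _ => hentry i j
    _ = (n * ‖A‖) ^ 2 := by
      simp only [Finset.sum_const, Finset.card_univ, Fintype.card_fin, nsmul_eq_mul]; ring
  rw [frobNorm, ← Real.sqrt_sq (by positivity : (0 : ℝ) ≤ n * ‖A‖)]
  exact Real.sqrt_le_sqrt h

lemma norm_mul_le_card_mul (A B : Matrix (Fin n) (Fin n) ℝ) : ‖A * B‖ ≤ n * (‖A‖ * ‖B‖) := by
  refine (norm_le_iff (by positivity)).2 fun i j => ?_
  rw [mul_apply]
  calc ‖∑ l, A i l * B l j‖ ≤ ∑ l, ‖A i l‖ * ‖B l j‖ :=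
        norm_sum_le_of_le _ fun l _ => norm_mul_le _ _
    _ ≤ ∑ _l : Fin n, ‖A‖ * ‖B‖ := Finset.sum_le_sum fun l _ =>
        mul_le_mul (norm_entry_le_entrywise_sup_norm A) (norm_entry_le_entrywise_sup_norm B)
          (norm_nonneg _) (norm_nonneg _)
    _ = n * (‖A‖ * ‖B‖) := by simp

lemma frobNorm_mul_transpose_le (A B : Matrix (Fin n) (Fin n) ℝ) :
    frobNorm (A * Bᵀ) ≤ n ^ 2 * (‖A‖ * ‖B‖) := calc
  frobNorm (A * Bᵀ) ≤ n * ‖A * Bᵀ‖ := frobNorm_le_card_mul_norm _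
  _ ≤ n * (n * (‖A‖ * ‖Bᵀ‖)) := by gcongr; exact norm_mul_le_card_mul _ _
  _ = n ^ 2 * (‖A‖ * ‖B‖) := by rw [norm_transpose]; ring

lemma measurable_frobNorm_comp {α : Type*} [MeasurableSpace α]
    {G : α → Matrix (Fin n) (Fin n) ℝ} (hG : ∀ i j, Measurable fun x => G x i j) :
    Measurable fun x => frobNorm (G x) :=
  Real.continuous_sqrt.measurable.comp <| Finset.measurable_sum _ fun i _ =>
    Finset.measurable_sum _ fun j _ => (hG i j).mul (hG i j)

end Frobenius

lemma ContDiffAt.exists_norm_fderiv_le_mul_norm_sub {E F : Type*} [NormedAddCommGroup E]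
    [NormedSpace ℝ E] [NormedAddCommGroup F] [NormedSpace ℝ F] {f : E → F} {x₀ : E}
    (hf : ContDiffAt ℝ 2 f x₀) (hcrit : fderiv ℝ f x₀ = 0) :
    ∃ K : ℝ≥0, ∃ r > 0, ∀ x, ‖x - x₀‖ < r → ‖fderiv ℝ f x‖ ≤ K * ‖x - x₀‖ := by
  obtain ⟨K, s, hs, hK⟩ := (hf.fderiv_right (by norm_num)).exists_lipschitzOnWith
  obtain ⟨r, hr, hball⟩ := Metric.mem_nhds_iff.mp hs
  refine ⟨K, r, hr, fun x hx => ?_⟩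
  have h := hK.dist_le_mul x (hball (mem_ball_iff_norm.2 hx)) x₀ (mem_of_mem_nhds hs)
  rwa [dist_eq_norm, dist_eq_norm, hcrit, sub_zero] at h

lemma norm_single_one_le {m n : Type*} [Fintype m] [Fintype n] [DecidableEq m] [DecidableEq n]
    (i : m) (j : n) : ‖Matrix.single i j (1 : ℝ)‖ ≤ 1 := by
  refine (norm_le_iff zero_le_one).2 fun a b => ?_
  rw [single_apply]
  split_ifs <;> simp

/- The bound on `fderiv ℝ w F` is stated pointwise: with the entrywise sup norm as a local
instance, instance search does not find the operator norm on `Matrix (Fin 3) (Fin 3) ℝ →L[ℝ] ℝ`. -/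
lemma norm_matGrad_le {w : Matrix (Fin 3) (Fin 3) ℝ → ℝ} {F : Matrix (Fin 3) (Fin 3) ℝ}
    {c : ℝ} (hc : 0 ≤ c) (hDw : ∀ V, ‖fderiv ℝ w F V‖ ≤ c * ‖V‖) : ‖matGrad w F‖ ≤ c :=
  (norm_le_iff hc).2 fun i j =>
    (hDw _).trans (mul_le_of_le_one_right hc (norm_single_one_le i j))

def kirchhoffStress (w : Matrix (Fin 3) (Fin 3) ℝ → ℝ) (F : Matrix (Fin 3) (Fin 3) ℝ) :
    Matrix (Fin 3) (Fin 3) ℝ :=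
  matGrad w F * Fᵀ

lemma frobNorm_kirchhoffStress_le {w : Matrix (Fin 3) (Fin 3) ℝ → ℝ}
    {F : Matrix (Fin 3) (Fin 3) ℝ} {c : ℝ} (hc : 0 ≤ c) (hDw : ∀ V, ‖fderiv ℝ w F V‖ ≤ c * ‖V‖) :
    frobNorm (kirchhoffStress w F) ≤ 9 * (c * ‖F‖) := by
  have h := frobNorm_mul_transpose_le (matGrad w F) F
  norm_num at h
  exact h.trans (by gcongr; exact norm_matGrad_le hc hDw)

lemma distSO3_le_frobNorm_sub_one (F : Matrix (Fin 3) (Fin 3) ℝ) :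
    distSO3 F ≤ frobNorm (F - 1) :=
  csInf_le ⟨0, by rintro _ ⟨R, -, rfl⟩; exact frobNorm_nonneg _⟩ ⟨1, ⟨by simp, det_one⟩, rfl⟩

lemma setOf_distSO3_lt_mem_nhds_one {δ : ℝ} (hδ : 0 < δ) :
    {F : Matrix (Fin 3) (Fin 3) ℝ | distSO3 F < δ} ∈ 𝓝 1 := by
  refine Filter.mem_of_superset (Metric.ball_mem_nhds 1 (by positivity : 0 < δ / 3))
    fun F hF => ?_
  have h := frobNorm_le_card_mul_norm (F - 1)
  rw [Metric.mem_ball, dist_eq_norm] at hF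
  push_cast at h
  exact (distSO3_le_frobNorm_sub_one F).trans_lt (by linarith)

lemma isLocalMin_wr_one {W : Matrix (Fin 3) (Fin 3) ℝ → ℝ≥0∞} (hW1 : W 1 = 0) :
    IsLocalMin (wr W) 1 :=
  Filter.Eventually.of_forall fun _ => by simp only [wr, hW1, ENNReal.toReal_zero]; positivity

lemma exists_kirchhoffStress_le_near_one {W : Matrix (Fin 3) (Fin 3) ℝ → ℝ≥0∞} {δ : ℝ}
    (hδ : 0 < δ) (hW1 : W 1 = 0)
    (hC2 : ContDiffOn ℝ 2 (wr W) {F : Matrix (Fin 3) (Fin 3) ℝ | distSO3 F < δ}) :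
    ∃ L ≥ (0 : ℝ), ∃ r > 0, ∀ F : Matrix (Fin 3) (Fin 3) ℝ, ‖F - 1‖ < r →
      frobNorm (kirchhoffStress (wr W) F) ≤ L * ‖F - 1‖ := by
  obtain ⟨K, r, hr, hK⟩ := ContDiffAt.exists_norm_fderiv_le_mul_norm_sub
    (hC2.contDiffAt (setOf_distSO3_lt_mem_nhds_one hδ)) (isLocalMin_wr_one hW1).fderiv_eq_zero
  refine ⟨18 * K, by positivity, min r 1, by positivity, fun F hF => ?_⟩
  have hF_le : ‖F‖ ≤ 2 := calc
    ‖F‖ = ‖(F - 1) + 1‖ := by rw [sub_add_cancel]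
    _ ≤ ‖F - 1‖ + ‖(1 : Matrix (Fin 3) (Fin 3) ℝ)‖ := norm_add_le _ _
    _ ≤ 1 + 1 := by rw [norm_one]; gcongr; exact hF.le.trans (min_le_right _ _)
    _ = 2 := by norm_num
  have hDw := (fderiv ℝ (wr W) F).le_of_opNorm_le (hK F (hF.trans_le (min_le_left _ _)))
  calc frobNorm (kirchhoffStress (wr W) F) ≤ 9 * (K * ‖F - 1‖ * ‖F‖) :=
        frobNorm_kirchhoffStress_le (by positivity) hDw
    _ ≤ 9 * (K * ‖F - 1‖ * 2) := by gcongr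
    _ = 18 * K * ‖F - 1‖ := by ring

section Integrals

variable {α : Type*} [MeasurableSpace α] {μ : Measure α} {s : Set α}

lemma setLIntegral_ofReal_le_mul_sqrt_measure {f : α → ℝ} (hf : Measurable f) {M : ℝ}
    (hM : 0 ≤ M) (hf2 : ∫⁻ x in s, ENNReal.ofReal (f x ^ 2) ∂μ ≤ ENNReal.ofReal (M ^ 2))
    (hs : μ s ≠ ⊤) :
    ∫⁻ x in s, ENNReal.ofReal (f x) ∂μ ≤ ENNReal.ofReal (M * Real.sqrt (μ s).toReal) := by
  have hpow : ∀ x, ENNReal.ofReal (f x) ^ (2 : ℝ) ≤ ENNReal.ofReal (f x ^ 2) := fun x => by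
    rw [ENNReal.rpow_two]
    rcases le_total 0 (f x) with h | h
    · rw [ENNReal.ofReal_pow h]
    · simp [ENNReal.ofReal_of_nonpos h]
  have hholder := ENNReal.lintegral_mul_le_Lp_mul_Lq (μ.restrict s) Real.HolderConjugate.two_two
    (ENNReal.measurable_ofReal.comp hf).aemeasurable (aemeasurable_const (b := (1 : ℝ≥0∞)))
  simp only [Pi.mul_apply, mul_one, ENNReal.one_rpow, lintegral_one,
    Measure.restrict_apply_univ] at hholder
  calc ∫⁻ x in s, ENNReal.ofReal (f x) ∂μ
      ≤ (∫⁻ x in s, ENNReal.ofReal (f x) ^ (2 : ℝ) ∂μ) ^ (1 / 2 : ℝ) * μ s ^ (1 / 2 : ℝ) :=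
        hholder
    _ ≤ ENNReal.ofReal (M ^ 2) ^ (1 / 2 : ℝ) * ENNReal.ofReal ((μ s).toReal) ^ (1 / 2 : ℝ) := by
        rw [ENNReal.ofReal_toReal hs]
        gcongr
        exact (lintegral_mono hpow).trans hf2
    _ = ENNReal.ofReal (M * Real.sqrt (μ s).toReal) := by
        rw [ENNReal.ofReal_rpow_of_nonneg (by positivity) (by norm_num),
          ENNReal.ofReal_rpow_of_nonneg ENNReal.toReal_nonneg (by norm_num),
          ← ENNReal.ofReal_mul (by positivity), ← Real.sqrt_eq_rpow, ← Real.sqrt_eq_rpow,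
          Real.sqrt_sq hM]

lemma measure_diff_setOf_lt_le {f : α → ℝ} (hf : Measurable f) {c M : ℝ} (hc : 0 < c)
    (hf2 : ∫⁻ x in s, ENNReal.ofReal (f x ^ 2) ∂μ ≤ ENNReal.ofReal (M ^ 2)) :
    μ (s \ {x | f x < c}) ≤ ENNReal.ofReal (M ^ 2 / c ^ 2) := by
  have hmarkov : ENNReal.ofReal (c ^ 2) * μ (s \ {x | f x < c}) ≤ ENNReal.ofReal (M ^ 2) := calc
    ENNReal.ofReal (c ^ 2) * μ (s \ {x | f x < c})
        = ∫⁻ _ in s \ {x | f x < c}, ENNReal.ofReal (c ^ 2) ∂μ :=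
          (setLIntegral_const _ _).symm
    _ ≤ ∫⁻ x in s \ {x | f x < c}, ENNReal.ofReal (f x ^ 2) ∂μ :=
        setLIntegral_mono (ENNReal.measurable_ofReal.comp (hf.pow_const 2)) fun x hx =>
          ENNReal.ofReal_le_ofReal (pow_le_pow_left₀ hc.le (not_lt.1 hx.2) 2)
    _ ≤ ENNReal.ofReal (M ^ 2) := (lintegral_mono_set Set.sdiff_subset).trans hf2
  rw [ENNReal.ofReal_div_of_pos (by positivity), ENNReal.le_div_iff_mul_le
    (Or.inl (by simp [hc.ne'])) (Or.inl ENNReal.ofReal_ne_top), mul_comm]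
  exact hmarkov

end Integrals

lemma frobNorm_smul_kirchhoffStress_le_of_near {w : Matrix (Fin 3) (Fin 3) ℝ → ℝ}
    {L r t : ℝ}
    (hloc : ∀ F : Matrix (Fin 3) (Fin 3) ℝ, ‖F - 1‖ < r →
      frobNorm (kirchhoffStress w F) ≤ L * ‖F - 1‖)
    (hL : 0 ≤ L) (ht : 0 < t) {A : Matrix (Fin 3) (Fin 3) ℝ} (hA : frobNorm A < r / t) :
    frobNorm (t⁻¹ • kirchhoffStress w (1 + t • A)) ≤ L * frobNorm A := by
  have htA : ‖t • A‖ ≤ t * frobNorm A := by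
    simpa [norm_smul, abs_of_pos ht] using mul_le_mul_of_nonneg_left (norm_le_frobNorm A) ht.le
  have hnear : ‖(1 + t • A) - 1‖ < r := by
    rw [add_sub_cancel_left]
    exact htA.trans_lt (by rwa [lt_div_iff₀' ht] at hA)
  have h := hloc _ hnear
  rw [add_sub_cancel_left] at h
  rw [frobNorm_smul, abs_of_pos (inv_pos.2 ht)]
  calc t⁻¹ * frobNorm (kirchhoffStress w (1 + t • A)) ≤ t⁻¹ * (L * (t * frobNorm A)) := by
        gcongr; exact h.trans (by gcongr)
    _ = L * frobNorm A := by field_simp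

lemma ofReal_frobNorm_smul_kirchhoffStress_le {W : Matrix (Fin 3) (Fin 3) ℝ → ℝ≥0∞}
    {k t : ℝ}
    (hgrowth : ∀ F : Matrix (Fin 3) (Fin 3) ℝ, 0 < F.det →
      frobNorm (kirchhoffStress (wr W) F) ≤ k * (wr W F + 1))
    (hk : 0 ≤ k) (ht : 0 < t) {F : Matrix (Fin 3) (Fin 3) ℝ} (hF : 0 < F.det) :
    ENNReal.ofReal (frobNorm (t⁻¹ • kirchhoffStress (wr W) F)) ≤
      ENNReal.ofReal (k / t) * (W F + 1) := calc
  ENNReal.ofReal (frobNorm (t⁻¹ • kirchhoffStress (wr W) F))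
      ≤ ENNReal.ofReal (k / t * (wr W F + 1)) := by
        rw [frobNorm_smul, abs_of_pos (inv_pos.2 ht), div_eq_inv_mul, mul_assoc]
        gcongr
        exact hgrowth F hF
  _ = ENNReal.ofReal (k / t) * (ENNReal.ofReal (W F).toReal + 1) := by
        rw [ENNReal.ofReal_mul (by positivity), wr,
          ENNReal.ofReal_add ENNReal.toReal_nonneg zero_le_one, ENNReal.ofReal_one]
  _ ≤ ENNReal.ofReal (k / t) * (W F + 1) := by gcongr; exact ENNReal.ofReal_toReal_le

section StressIntegrals

variable {α : Type*} [MeasurableSpace α] {μ : Measure α} {s : Set α}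
  {G : α → Matrix (Fin 3) (Fin 3) ℝ} {M t : ℝ}

lemma setLIntegral_smul_kirchhoffStress_near_le {w : Matrix (Fin 3) (Fin 3) ℝ → ℝ}
    {L r : ℝ}
    (hloc : ∀ F : Matrix (Fin 3) (Fin 3) ℝ, ‖F - 1‖ < r →
      frobNorm (kirchhoffStress w F) ≤ L * ‖F - 1‖)
    (hL : 0 ≤ L) (ht : 0 < t) (hG : Measurable fun x => frobNorm (G x)) (hM : 0 ≤ M)
    (hG2 : ∫⁻ x in s, ENNReal.ofReal (frobNorm (G x) ^ 2) ∂μ ≤ ENNReal.ofReal (M ^ 2))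
    (hs : μ s ≠ ⊤) :
    ∫⁻ x in s ∩ {x | frobNorm (G x) < r / t},
        ENNReal.ofReal (frobNorm (t⁻¹ • kirchhoffStress w (1 + t • G x))) ∂μ
      ≤ ENNReal.ofReal (L * (M * Real.sqrt (μ s).toReal)) := calc
  _ ≤ ∫⁻ x in s ∩ {x | frobNorm (G x) < r / t},
        ENNReal.ofReal L * ENNReal.ofReal (frobNorm (G x)) ∂μ :=
      setLIntegral_mono (measurable_const.mul (ENNReal.measurable_ofReal.comp hG)) fun x hx => by
        rw [← ENNReal.ofReal_mul hL]
        exact ENNReal.ofReal_le_ofReal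
          (frobNorm_smul_kirchhoffStress_le_of_near hloc hL ht hx.2)
  _ ≤ ENNReal.ofReal L * ∫⁻ x in s, ENNReal.ofReal (frobNorm (G x)) ∂μ := by
      rw [lintegral_const_mul' _ _ ENNReal.ofReal_ne_top]
      gcongr
      exact Set.inter_subset_left
  _ ≤ ENNReal.ofReal L * ENNReal.ofReal (M * Real.sqrt (μ s).toReal) := by
      gcongr
      exact setLIntegral_ofReal_le_mul_sqrt_measure hG hM hG2 hs
  _ = ENNReal.ofReal (L * (M * Real.sqrt (μ s).toReal)) := (ENNReal.ofReal_mul hL).symm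

lemma setLIntegral_smul_kirchhoffStress_far_le {W : Matrix (Fin 3) (Fin 3) ℝ → ℝ≥0∞}
    {k r : ℝ}
    (hgrowth : ∀ F : Matrix (Fin 3) (Fin 3) ℝ, 0 < F.det →
      frobNorm (kirchhoffStress (wr W) F) ≤ k * (wr W F + 1))
    (hk : 0 ≤ k) (hr : 0 < r) (ht : 0 < t) (hG : Measurable fun x => frobNorm (G x))
    (hM : 0 ≤ M) (hdet : ∀ᵐ x ∂μ.restrict s, 0 < (1 + t • G x).det)
    (hG2 : ∫⁻ x in s, ENNReal.ofReal (frobNorm (G x) ^ 2) ∂μ ≤ ENNReal.ofReal (M ^ 2))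
    (hW : ∫⁻ x in s, W (1 + t • G x) ∂μ ≤ ENNReal.ofReal (M * t ^ 2)) :
    ∫⁻ x in s \ {x | frobNorm (G x) < r / t},
        ENNReal.ofReal (frobNorm (t⁻¹ • kirchhoffStress (wr W) (1 + t • G x))) ∂μ
      ≤ ENNReal.ofReal (k * (M ^ 2 / r ^ 2 + M) * t) := calc
  _ ≤ ∫⁻ x in s \ {x | frobNorm (G x) < r / t},
        ENNReal.ofReal (k / t) * (W (1 + t • G x) + 1) ∂μ :=
      lintegral_mono_ae <| (ae_restrict_of_ae_restrict_of_subset Set.sdiff_subset hdet).mono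
        fun x hx => ofReal_frobNorm_smul_kirchhoffStress_le hgrowth hk ht hx
  _ = ENNReal.ofReal (k / t) * (∫⁻ x in s \ {x | frobNorm (G x) < r / t}, W (1 + t • G x) ∂μ
        + μ (s \ {x | frobNorm (G x) < r / t})) := by
      rw [lintegral_const_mul' _ _ ENNReal.ofReal_ne_top, lintegral_add_right _ measurable_const,
        setLIntegral_const, one_mul]
  _ ≤ ENNReal.ofReal (k / t) *
        (ENNReal.ofReal (M * t ^ 2) + ENNReal.ofReal (M ^ 2 / (r / t) ^ 2)) := by
      gcongr
      · exact (lintegral_mono_set Set.sdiff_subset).trans hW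
      · exact measure_diff_setOf_lt_le hG (by positivity) hG2
  _ = ENNReal.ofReal (k * (M ^ 2 / r ^ 2 + M) * t) := by
      rw [← ENNReal.ofReal_add (by positivity) (by positivity),
        ← ENNReal.ofReal_mul (by positivity)]
      congr 1
      field_simp
      ring

end StressIntegrals

theorem statement3_general (Ω : Set (Fin 3 → ℝ)) (hΩfin : volume Ω < ⊤)
    (M : ℝ) (hM : 0 < M)
    (W : Matrix (Fin 3) (Fin 3) ℝ → ℝ≥0∞) (δ k : ℝ) (hδ : 0 < δ) (hk : 0 < k)
    (hWId : W 1 = 0)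
    (hC2 : ContDiffOn ℝ 2 (wr W) {F : Matrix (Fin 3) (Fin 3) ℝ | distSO3 F < δ})
    (hgrowth : ∀ F : Matrix (Fin 3) (Fin 3) ℝ, 0 < F.det →
      frobNorm (matGrad (wr W) F * Fᵀ) ≤ k * (wr W F + 1)) :
    ∃ C > (0:ℝ), ∀ t ∈ Set.Ioc (0:ℝ) 1, ∀ G : (Fin 3 → ℝ) → Matrix (Fin 3) (Fin 3) ℝ,
      (∀ i j, Measurable fun x => G x i j) →
      (∀ᵐ x ∂volume.restrict Ω, 0 < (1 + t • G x).det) →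
      (∫⁻ x in Ω, ENNReal.ofReal (frobNorm (G x) ^ 2) ≤ ENNReal.ofReal (M ^ 2)) →
      (∫⁻ x in Ω, W (1 + t • G x) ≤ ENNReal.ofReal (M * t ^ 2)) →
      ∀ Λ ⊆ Ω, MeasurableSet Λ →
        ∫⁻ x in Λ,
            ENNReal.ofReal (frobNorm (t⁻¹ • (matGrad (wr W) (1 + t • G x) * (1 + t • G x)ᵀ)))
          ≤ ENNReal.ofReal (C * (t + Real.sqrt (volume Λ).toReal)) := by
  obtain ⟨L, hL, r, hr, hloc⟩ := exists_kirchhoffStress_le_near_one hδ hWId hC2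
  set K := k * (M ^ 2 / r ^ 2 + M)
  refine ⟨L * M + K + 1, by positivity, ?_⟩
  rintro t ⟨ht, -⟩ G hG hdet hG2 hW Λ hΛΩ -
  have hGm := measurable_frobNorm_comp hG
  have hΛfin : volume Λ ≠ ⊤ := ((measure_mono hΛΩ).trans_lt hΩfin).ne
  rw [← lintegral_inter_add_sdiff _ Λ (measurableSet_lt hGm measurable_const)]
  calc _ ≤ ENNReal.ofReal (L * (M * Real.sqrt (volume Λ).toReal)) + ENNReal.ofReal (K * t) :=
        add_le_add
          (setLIntegral_smul_kirchhoffStress_near_le hloc hL ht hGm hM.le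
            ((lintegral_mono_set hΛΩ).trans hG2) hΛfin)
          (setLIntegral_smul_kirchhoffStress_far_le hgrowth hk.le hr ht hGm hM.le
            (ae_restrict_of_ae_restrict_of_subset hΛΩ hdet) ((lintegral_mono_set hΛΩ).trans hG2)
            ((lintegral_mono_set hΛΩ).trans hW))
    _ ≤ ENNReal.ofReal ((L * M + K + 1) * (t + Real.sqrt (volume Λ).toReal)) := by
        rw [← ENNReal.ofReal_add (by positivity) (by positivity)]
        gcongr
        nlinarith [Real.sqrt_nonneg (volume Λ).toReal, mul_nonneg (mul_nonneg hL hM.le) ht.le,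
          mul_nonneg (by positivity : 0 ≤ K) (Real.sqrt_nonneg (volume Λ).toReal)]

/-- an `L¹` bound `∫_Λ |E| ≤ C (t + |Λ|^{1/2})` for the scaled stress. -/
theorem statement3 (Ω : Set (Fin 3 → ℝ)) (hΩm : MeasurableSet Ω) (hΩfin : volume Ω < ⊤)
    (M : ℝ) (hM : 0 < M)
    (W : Matrix (Fin 3) (Fin 3) ℝ → ℝ≥0∞) (δ k : ℝ) (hδ : 0 < δ) (hk : 0 < k)
    (hfin : ∀ F : Matrix (Fin 3) (Fin 3) ℝ, 0 < F.det → W F ≠ ⊤)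
    (hC1 : ContDiffOn ℝ 1 (wr W) {F : Matrix (Fin 3) (Fin 3) ℝ | 0 < F.det})
    (hWId : W 1 = 0)
    (hfinδ : ∀ F : Matrix (Fin 3) (Fin 3) ℝ, distSO3 F < δ → W F ≠ ⊤)
    (hC2 : ContDiffOn ℝ 2 (wr W) {F : Matrix (Fin 3) (Fin 3) ℝ | distSO3 F < δ})
    (hgrowth : ∀ F : Matrix (Fin 3) (Fin 3) ℝ, 0 < F.det →
      frobNorm (matGrad (wr W) F * Fᵀ) ≤ k * (wr W F + 1)) :
    ∃ C > (0:ℝ), ∀ t ∈ Set.Ioc (0:ℝ) 1, ∀ G : (Fin 3 → ℝ) → Matrix (Fin 3) (Fin 3) ℝ,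
      (∀ i j, Measurable fun x => G x i j) →
      (∀ᵐ x ∂volume.restrict Ω, 0 < (1 + t • G x).det) →
      (∫⁻ x in Ω, ENNReal.ofReal (frobNorm (G x) ^ 2) ≤ ENNReal.ofReal (M ^ 2)) →
      (∫⁻ x in Ω, W (1 + t • G x) ≤ ENNReal.ofReal (M * t ^ 2)) →
      ∀ Λ ⊆ Ω, MeasurableSet Λ →
        ∫⁻ x in Λ,
            ENNReal.ofReal (frobNorm (t⁻¹ • (matGrad (wr W) (1 + t • G x) * (1 + t • G x)ᵀ)))
          ≤ ENNReal.ofReal (C * (t + Real.sqrt (volume Λ).toReal)) :=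
  statement3_general Ω hΩfin M hM W δ k hδ hk hWId hC2 hgrowth
end
end

section
/- Let L : M^{3×3} → M^{3×3} be linear, self-adjoint with respect to the Frobenius inner product, satisfying LA = L(sym A) for every A and LF : F ≥ c|sym F|² for some c > 0. Define Q₃(F) := LF : F, and for G″ ∈ M^{2×2} define Q₂(G″) := min{ Q₃(F) : F ∈ M^{3×3}, F_{ij} = G″_{ij} for 1 ≤ i,j ≤ 2 }, with L₂ : M^{2×2} → M^{2×2} the self-adjoint linear map satisfying L₂A = L₂(sym A) and Q₂(G″) = L₂G″ : G″. Let G ∈ M^{3×3} be symmetric and suppose that E := LG is symmetric and satisfies E e₃ = 0 (where e₃ is the third standard basis vector). Then Q₃(G) = Q₂(G″) and E″ = L₂ G″, where G″ (resp. E″) denotes the 2×2 matrix with entries G_{ij} (resp. E_{ij}) for 1 ≤ i, j ≤ 2. -/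
open Matrix MeasureTheory Filter Topology
open scoped ENNReal

noncomputable section

attribute [local instance] Matrix.normedAddCommGroup Matrix.normedSpace

/-- The symmetric part `sym A = (A + Aᵀ)/2`. -/
def symPart {n : ℕ} (A : Matrix (Fin n) (Fin n) ℝ) : Matrix (Fin n) (Fin n) ℝ :=
  (2⁻¹ : ℝ) • (A + Aᵀ)

/-- The quadratic form `Q₃(F) = 𝓛F : F`. -/
def Q3 (L : Matrix (Fin 3) (Fin 3) ℝ →ₗ[ℝ] Matrix (Fin 3) (Fin 3) ℝ)
    (F : Matrix (Fin 3) (Fin 3) ℝ) : ℝ := frobInner (L F) F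

/-- `F ∈ M³ˣ³` has `G ∈ M²ˣ²` as its upper-left 2×2 submatrix. -/
def ExtendsTo (G : Matrix (Fin 2) (Fin 2) ℝ) (F : Matrix (Fin 3) (Fin 3) ℝ) : Prop :=
  ∀ i j : Fin 2, F i.castSucc j.castSucc = G i j

/-- The reduced quadratic form `Q₂(G) = inf { Q₃(F) : F″ = G }`. -/
def Q2 (L : Matrix (Fin 3) (Fin 3) ℝ →ₗ[ℝ] Matrix (Fin 3) (Fin 3) ℝ)
    (G : Matrix (Fin 2) (Fin 2) ℝ) : ℝ :=
  sInf {q | ∃ F : Matrix (Fin 3) (Fin 3) ℝ, ExtendsTo G F ∧ q = Q3 L F}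

/-!
Since `E = 𝓛G` vanishes on the last row and column, `E : (F - G) = 0` for every `F`
with `F″ = G″`, so `Q₃(F) = Q₃(G) + Q₃(F - G) ≥ Q₃(G)`: `G` realises the minimum `Q₂(G″)`.
Minimality then gives the Euler–Lagrange equation: for every `H ∈ M²ˣ²` and `t ∈ ℝ`, the
competitor `G + t H̃` (`H̃` the zero padding of `H`) satisfies `Q₂(G″ + tH) ≤ Q₃(G + t H̃)`,
both sides agree at `t = 0`, and comparing first-order terms yields `𝓛₂G″ : H = E″ : H`.
-/

lemma eq_zero_of_forall_two_mul_mul_add_sq_mul_nonneg {a b : ℝ}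
    (h : ∀ t : ℝ, 0 ≤ 2 * t * a + t ^ 2 * b) : a = 0 := by
  have hs : |b| + 1 ≠ 0 := by positivity
  -- at `t = -a / (|b| + 1)` the linear term outweighs the quadratic one
  have hscaled := mul_nonneg (h (-a / (|b| + 1))) (sq_nonneg (|b| + 1))
  rw [show (2 * (-a / (|b| + 1)) * a + (-a / (|b| + 1)) ^ 2 * b) * (|b| + 1) ^ 2
      = a ^ 2 * (b - 2 * (|b| + 1)) by field_simp; ring] at hscaled
  have hneg : b - 2 * (|b| + 1) < 0 := by linarith [le_abs_self b, abs_nonneg b]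
  have : a ^ 2 ≤ 0 := by nlinarith
  exact pow_eq_zero_iff two_ne_zero |>.mp (le_antisymm this (sq_nonneg a))

section Frobenius

variable {n : ℕ}

lemma frobInner_comm (A B : Matrix (Fin n) (Fin n) ℝ) : frobInner A B = frobInner B A := by
  simp only [frobInner, mul_comm]

lemma frobInner_add_left (A B C : Matrix (Fin n) (Fin n) ℝ) :
    frobInner (A + B) C = frobInner A C + frobInner B C := by
  simp [frobInner, add_mul, Finset.sum_add_distrib]

lemma frobInner_add_right (A B C : Matrix (Fin n) (Fin n) ℝ) :
    frobInner A (B + C) = frobInner A B + frobInner A C := by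
  rw [frobInner_comm, frobInner_add_left, frobInner_comm B, frobInner_comm C]

lemma frobInner_smul_left (t : ℝ) (A B : Matrix (Fin n) (Fin n) ℝ) :
    frobInner (t • A) B = t * frobInner A B := by
  simp [frobInner, Finset.mul_sum, mul_assoc]

lemma frobInner_smul_right (t : ℝ) (A B : Matrix (Fin n) (Fin n) ℝ) :
    frobInner A (t • B) = t * frobInner A B := by
  rw [frobInner_comm, frobInner_smul_left, frobInner_comm]

@[simp]
lemma frobInner_zero_left (A : Matrix (Fin n) (Fin n) ℝ) : frobInner 0 A = 0 := by
  simp [frobInner]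

lemma frobInner_single_one (A : Matrix (Fin n) (Fin n) ℝ) (i j : Fin n) :
    frobInner A (single i j 1) = A i j := by
  simp [frobInner, single, mul_ite, ite_and, Finset.sum_ite_eq]

lemma ext_of_forall_frobInner_eq {A B : Matrix (Fin n) (Fin n) ℝ}
    (h : ∀ H, frobInner A H = frobInner B H) : A = B := by
  ext i j
  simpa only [frobInner_single_one] using h (single i j 1)

lemma frobInner_map_add_smul (L : Matrix (Fin n) (Fin n) ℝ →ₗ[ℝ] Matrix (Fin n) (Fin n) ℝ)
    (hsa : ∀ A B, frobInner (L A) B = frobInner A (L B)) (A B : Matrix (Fin n) (Fin n) ℝ)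
    (t : ℝ) :
    frobInner (L (A + t • B)) (A + t • B)
      = frobInner (L A) A + 2 * t * frobInner (L A) B + t ^ 2 * frobInner (L B) B := by
  have hcross : frobInner (L B) A = frobInner (L A) B := by rw [hsa, frobInner_comm]
  simp only [map_add, map_smul, frobInner_add_left, frobInner_add_right, frobInner_smul_left,
    frobInner_smul_right, hcross]
  ring

def padZero (H : Matrix (Fin n) (Fin n) ℝ) : Matrix (Fin (n + 1)) (Fin (n + 1)) ℝ :=
  of fun i j => Fin.lastCases 0 (fun i' => Fin.lastCases 0 (fun j' => H i' j') j) i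

@[simp]
lemma padZero_castSucc_castSucc (H : Matrix (Fin n) (Fin n) ℝ) (i j : Fin n) :
    padZero H i.castSucc j.castSucc = H i j := by
  simp [padZero]

@[simp]
lemma padZero_last_left (H : Matrix (Fin n) (Fin n) ℝ) (j : Fin (n + 1)) :
    padZero H (Fin.last n) j = 0 := by
  simp [padZero]

@[simp]
lemma padZero_last_right (H : Matrix (Fin n) (Fin n) ℝ) (i : Fin (n + 1)) :
    padZero H i (Fin.last n) = 0 := by
  cases i using Fin.lastCases <;> simp [padZero]

lemma frobInner_padZero (A : Matrix (Fin (n + 1)) (Fin (n + 1)) ℝ)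
    (H : Matrix (Fin n) (Fin n) ℝ) :
    frobInner A (padZero H) = frobInner (A.submatrix Fin.castSucc Fin.castSucc) H := by
  simp [frobInner, Fin.sum_univ_castSucc]

lemma padZero_submatrix_castSucc {A : Matrix (Fin (n + 1)) (Fin (n + 1)) ℝ}
    (hrow : ∀ j, A (Fin.last n) j = 0) (hcol : ∀ i, A i (Fin.last n) = 0) :
    padZero (A.submatrix Fin.castSucc Fin.castSucc) = A := by
  ext i j
  cases i using Fin.lastCases <;> cases j using Fin.lastCases <;> simp [hrow, hcol]

end Frobenius

section Reduction

variable {L : Matrix (Fin 3) (Fin 3) ℝ →ₗ[ℝ] Matrix (Fin 3) (Fin 3) ℝ}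

lemma Q3_nonneg_of_coercive {c : ℝ} (hc : 0 < c)
    (hpos : ∀ F, c * frobNorm (symPart F) ^ 2 ≤ Q3 L F) (F : Matrix (Fin 3) (Fin 3) ℝ) :
    0 ≤ Q3 L F :=
  (by positivity : 0 ≤ c * frobNorm (symPart F) ^ 2).trans (hpos F)

lemma Q2_le_Q3 (hnonneg : ∀ F, 0 ≤ Q3 L F) {H : Matrix (Fin 2) (Fin 2) ℝ}
    {F : Matrix (Fin 3) (Fin 3) ℝ} (hF : ExtendsTo H F) : Q2 L H ≤ Q3 L F :=
  csInf_le ⟨0, by rintro q ⟨F', -, rfl⟩; exact hnonneg F'⟩ ⟨F, hF, rfl⟩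

lemma Q2_submatrix_eq_Q3_of_orthogonal
    (hsa : ∀ A B, frobInner (L A) B = frobInner A (L B)) (hnonneg : ∀ F, 0 ≤ Q3 L F)
    {G : Matrix (Fin 3) (Fin 3) ℝ}
    (horth : ∀ D, D.submatrix Fin.castSucc Fin.castSucc = 0 → frobInner (L G) D = 0) :
    Q2 L (G.submatrix Fin.castSucc Fin.castSucc) = Q3 L G := by
  refine IsLeast.csInf_eq ⟨⟨G, fun _ _ => rfl, rfl⟩, ?_⟩
  rintro q ⟨F, hF, rfl⟩
  have hD : (F - G).submatrix Fin.castSucc Fin.castSucc = 0 := by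
    ext i j
    simp [hF i j]
  have hexpand := frobInner_map_add_smul L hsa G (F - G) 1
  rw [one_smul, add_sub_cancel, horth _ hD] at hexpand
  have := hnonneg (F - G)
  simp only [Q3] at this ⊢
  linarith

lemma submatrix_map_eq_of_Q2_submatrix_eq_Q3
    (hsa : ∀ A B, frobInner (L A) B = frobInner A (L B)) (hnonneg : ∀ F, 0 ≤ Q3 L F)
    {L2 : Matrix (Fin 2) (Fin 2) ℝ →ₗ[ℝ] Matrix (Fin 2) (Fin 2) ℝ}
    (hsa2 : ∀ A B, frobInner (L2 A) B = frobInner A (L2 B))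
    (hQ2 : ∀ G, Q2 L G = frobInner (L2 G) G) {G : Matrix (Fin 3) (Fin 3) ℝ}
    (hmin : Q2 L (G.submatrix Fin.castSucc Fin.castSucc) = Q3 L G) :
    (L G).submatrix Fin.castSucc Fin.castSucc = L2 (G.submatrix Fin.castSucc Fin.castSucc) := by
  set G₂ := G.submatrix Fin.castSucc Fin.castSucc
  refine ext_of_forall_frobInner_eq fun H => ?_
  rw [← sub_eq_zero]
  refine eq_zero_of_forall_two_mul_mul_add_sq_mul_nonneg
    (b := Q3 L (padZero H) - frobInner (L2 H) H) fun t => ?_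
  have h := Q2_le_Q3 hnonneg (H := G₂ + t • H) (F := G + t • padZero H) fun i j => by
    simp [G₂]
  rw [hQ2, frobInner_map_add_smul L2 hsa2, ← hQ2, hmin, Q3, Q3, frobInner_map_add_smul L hsa,
    frobInner_padZero] at h
  rw [Q3]
  linarith

end Reduction

theorem statement13_general (L : Matrix (Fin 3) (Fin 3) ℝ →ₗ[ℝ] Matrix (Fin 3) (Fin 3) ℝ)
    (c : ℝ) (hc : 0 < c)
    (hsa : ∀ A B : Matrix (Fin 3) (Fin 3) ℝ, frobInner (L A) B = frobInner A (L B))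
    (hpos : ∀ F : Matrix (Fin 3) (Fin 3) ℝ, c * frobNorm (symPart F) ^ 2 ≤ Q3 L F)
    (L2 : Matrix (Fin 2) (Fin 2) ℝ →ₗ[ℝ] Matrix (Fin 2) (Fin 2) ℝ)
    (hsa2 : ∀ A B : Matrix (Fin 2) (Fin 2) ℝ, frobInner (L2 A) B = frobInner A (L2 B))
    (hQ2 : ∀ G : Matrix (Fin 2) (Fin 2) ℝ, Q2 L G = frobInner (L2 G) G)
    (G : Matrix (Fin 3) (Fin 3) ℝ)
    (hEsym : (L G).IsSymm)
    (hEe3 : (L G) *ᵥ Pi.single (2 : Fin 3) (1:ℝ) = 0) :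
    Q3 L G = Q2 L (G.submatrix Fin.castSucc Fin.castSucc) ∧
    (L G).submatrix Fin.castSucc Fin.castSucc = L2 (G.submatrix Fin.castSucc Fin.castSucc) := by
  have hnonneg := Q3_nonneg_of_coercive hc hpos
  have hcol : ∀ i, L G i (Fin.last 2) = 0 := fun i => by
    simpa [mulVec_single_one] using congrFun hEe3 i
  have hrow : ∀ j, L G (Fin.last 2) j = 0 := fun j => (hEsym.apply _ j).symm.trans (hcol j)
  have hmin : Q2 L (G.submatrix Fin.castSucc Fin.castSucc) = Q3 L G :=
    Q2_submatrix_eq_Q3_of_orthogonal hsa hnonneg fun D hD => by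
      rw [← padZero_submatrix_castSucc hrow hcol, frobInner_comm, frobInner_padZero, hD,
        frobInner_zero_left]
  exact ⟨hmin.symm, submatrix_map_eq_of_Q2_submatrix_eq_Q3 hsa hnonneg hsa2 hQ2 hmin⟩

/-- if `G` is symmetric, `E = 𝓛G` is symmetric and `E e₃ = 0`, then
`Q₃(G) = Q₂(G″)` and `E″ = 𝓛₂ G″`. -/
theorem statement13 (L : Matrix (Fin 3) (Fin 3) ℝ →ₗ[ℝ] Matrix (Fin 3) (Fin 3) ℝ)
    (c : ℝ) (hc : 0 < c)
    (hsa : ∀ A B : Matrix (Fin 3) (Fin 3) ℝ, frobInner (L A) B = frobInner A (L B))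
    (hLsym : ∀ A : Matrix (Fin 3) (Fin 3) ℝ, L A = L (symPart A))
    (hpos : ∀ F : Matrix (Fin 3) (Fin 3) ℝ, c * frobNorm (symPart F) ^ 2 ≤ Q3 L F)
    (L2 : Matrix (Fin 2) (Fin 2) ℝ →ₗ[ℝ] Matrix (Fin 2) (Fin 2) ℝ)
    (hsa2 : ∀ A B : Matrix (Fin 2) (Fin 2) ℝ, frobInner (L2 A) B = frobInner A (L2 B))
    (hL2sym : ∀ A : Matrix (Fin 2) (Fin 2) ℝ, L2 A = L2 (symPart A))
    (hQ2 : ∀ G : Matrix (Fin 2) (Fin 2) ℝ, Q2 L G = frobInner (L2 G) G)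
    (G : Matrix (Fin 3) (Fin 3) ℝ) (hGsym : G.IsSymm)
    (hEsym : (L G).IsSymm)
    (hEe3 : (L G) *ᵥ Pi.single (2 : Fin 3) (1:ℝ) = 0) :
    Q3 L G = Q2 L (G.submatrix Fin.castSucc Fin.castSucc) ∧
    (L G).submatrix Fin.castSucc Fin.castSucc = L2 (G.submatrix Fin.castSucc Fin.castSucc) :=
  statement13_general L c hc hsa hpos L2 hsa2 hQ2 G hEsym hEe3
end
end
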